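/- Let α ∈ ℝ be irrational and ψ: (0,∞) → (0,∞) decreasing such that the inequality |α − u/v| < ψ(v)/v has only finitely many solutions in pairs of odd integers u, v with v ≥ 1. Then there exists c > 0 such that c · (ψ(t/π + 1))² ≤ |1 + (e^{it} + e^{itα})/2| for all t ≥ 0. -/

import Mathlib

/-!
Put `t = π x`. The real part of `1 + (e^{iπx} + e^{iπxα})/2` is
`(1 + cos πx)/2 + (1 + cos πxα)/2`, and `(1 + cos πy)/2 ≥ (y - v)²` for every odd `v` within
distance `1` of `y`. Choosing odd `v ≈ x` and `u ≈ xα` gives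
`g(t) ≥ (x - v)² + (xα - u)² ≳ (vα - u)²`. Outside a finite exceptional set every odd pair
satisfies `|vα - u| ≥ ψ(v) ≥ ψ(x + 1)`, while on the exceptional set `|vα - u|` is bounded
below by irrationality of `α`.
-/

open Real Filter Topology

lemma Set.Finite.exists_pos_forall_le {ι : Type*} {S : Set ι} (hS : S.Finite) {f : ι → ℝ}
    (hf : ∀ p ∈ S, 0 < f p) : ∃ δ > 0, ∀ p ∈ S, δ ≤ f p := by
  have hsmall : ∀ᶠ δ in 𝓝[>] (0 : ℝ), ∀ p ∈ S, δ ≤ f p :=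
    (eventually_all_finite hS).2 fun p hp => nhdsWithin_le_nhds (eventually_le_nhds (hf p hp))
  exact (eventually_mem_nhdsWithin.and hsmall).exists

lemma le_abs_mul_sub_of_not_lt {α r : ℝ} {u v : ℤ} (hv : 0 < v)
    (h : ¬ |α - u / v| < r / v) : r ≤ |v * α - u| := by
  have hv' : (0 : ℝ) < v := Int.cast_pos.mpr hv
  have hdiff : (v : ℝ) * α - u = v * (α - u / v) := by field_simp
  rw [not_lt, div_le_iff₀ hv'] at h
  rw [hdiff, abs_mul, abs_of_pos hv']
  linarith

lemma Irrational.exists_pos_min_le_abs_mul_sub {α : ℝ} (hα : Irrational α) (ψ : ℝ → ℝ)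
    (hfin : {p : ℤ × ℤ | Odd p.1 ∧ Odd p.2 ∧ 1 ≤ p.2 ∧
        |α - (p.1 : ℝ) / (p.2 : ℝ)| < ψ (p.2 : ℝ) / (p.2 : ℝ)}.Finite) :
    ∃ δ > 0, ∀ u v : ℤ, Odd u → Odd v → 1 ≤ v → min δ (ψ v) ≤ |v * α - u| := by
  obtain ⟨δ, hδ, hle⟩ := hfin.exists_pos_forall_le (f := fun p => |p.2 * α - p.1|)
    fun p hp => abs_pos.mpr <| sub_ne_zero.mpr <|
      (hα.intCast_mul (by have := hp.2.2.1; omega)).ne_int p.1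
  refine ⟨δ, hδ, fun u v hu hv hv1 => ?_⟩
  by_cases hmem : |α - u / v| < ψ v / v
  · exact (min_le_left _ _).trans (hle (u, v) ⟨hu, hv, hv1, hmem⟩)
  · exact (min_le_right _ _).trans (le_abs_mul_sub_of_not_lt hv1 hmem)

lemma min_one_div_mul_le_min {ψ : ℝ → ℝ} (hψpos : ∀ t : ℝ, 0 < t → 0 < ψ t)
    (hψdec : AntitoneOn ψ (Set.Ioi 0)) {δ v y : ℝ} (hδ : 0 ≤ δ) (hv : 1 ≤ v) (hvy : v ≤ y) :
    min 1 (δ / ψ 1) * ψ y ≤ min δ (ψ v) := by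
  have hψ1 : 0 < ψ 1 := hψpos 1 one_pos
  have hψy : 0 < ψ y := hψpos y (by linarith)
  have mem : ∀ {s}, 1 ≤ s → s ∈ Set.Ioi (0 : ℝ) := fun hs => Set.mem_Ioi.mpr (by linarith)
  refine le_min ?_ ?_
  · calc min 1 (δ / ψ 1) * ψ y ≤ δ / ψ 1 * ψ 1 :=
          mul_le_mul (min_le_right _ _) (hψdec (mem le_rfl) (mem (hv.trans hvy)) (hv.trans hvy))
            hψy.le (by positivity)
      _ = δ := div_mul_cancel₀ δ hψ1.ne'
  · calc min 1 (δ / ψ 1) * ψ y ≤ 1 * ψ v :=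
          mul_le_mul (min_le_left _ _) (hψdec (mem hv) (mem (hv.trans hvy)) hvy) hψy.le zero_le_one
      _ = ψ v := one_mul _

lemma exists_odd_abs_sub_le_one (y : ℝ) : ∃ v : ℤ, Odd v ∧ |y - v| ≤ 1 ∧ (0 ≤ y → 1 ≤ v) := by
  refine ⟨2 * ⌊y / 2⌋ + 1, ⟨_, rfl⟩, ?_, fun hy => ?_⟩
  · have h₁ := Int.floor_le (y / 2)
    have h₂ := Int.lt_floor_add_one (y / 2)
    push_cast
    rw [abs_le]
    constructor <;> linarith
  · have : 0 ≤ ⌊y / 2⌋ := Int.floor_nonneg.mpr (by positivity)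
    omega

lemma sq_sub_le_one_add_cos_pi_mul_div_two {y : ℝ} {v : ℤ} (hv : Odd v) (h : |y - v| ≤ 1) :
    (y - v) ^ 2 ≤ (1 + cos (π * y)) / 2 := by
  have hcos : cos (π * y) = -cos (π * (y - v)) := by
    have := cos_add_int_mul_pi (π * (y - v)) v
    rw [hv.neg_one_zpow, show π * (y - v) + v * π = π * y by ring] at this
    linarith
  have habs : |π * (y - v)| ≤ π := by
    rw [abs_mul, abs_of_pos pi_pos]
    exact mul_le_of_le_one_right pi_pos.le h
  have hquad := cos_le_one_sub_mul_cos_sq habs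
  rw [show 2 / π ^ 2 * (π * (y - v)) ^ 2 = 2 * (y - v) ^ 2 by field_simp] at hquad
  linarith

lemma sq_mul_sub_le (α x : ℝ) (u v : ℤ) :
    (v * α - u) ^ 2 ≤ 2 * (1 + α ^ 2) * ((x - v) ^ 2 + (x * α - u) ^ 2) := by
  nlinarith [sq_nonneg (α * (v - x) - (x * α - u)), sq_nonneg (x - v), sq_nonneg (x * α - u),
    sq_nonneg α, mul_nonneg (sq_nonneg α) (sq_nonneg (x * α - u))]

lemma one_add_cos_div_two_add_le_norm (a b : ℝ) :
    (1 + cos a) / 2 + (1 + cos b) / 2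
      ≤ ‖1 + (Complex.exp (a * Complex.I) + Complex.exp (b * Complex.I)) / 2‖ := by
  refine le_of_eq_of_le ?_ (Complex.re_le_norm _)
  simp only [Complex.add_re, Complex.one_re, Complex.div_ofNat_re, Complex.exp_ofReal_mul_I_re]
  ring

/-- If `α` is irrational and the inequality `|α - u/v| < ψ(v)/v` has only finitely many
solutions in odd integers `u, v` with `v ≥ 1`, then `g(t) = |1 + (e^{it} + e^{itα})/2|`
is bounded below by `c (ψ(t/π + 1))²` for all `t ≥ 0`. -/
theorem g_lower_bound_of_finitely_many_oddOdd (α : ℝ) (hα : Irrational α) (ψ : ℝ → ℝ)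
    (hψpos : ∀ t : ℝ, 0 < t → 0 < ψ t) (hψdec : AntitoneOn ψ (Set.Ioi 0))
    (hfin : {p : ℤ × ℤ | Odd p.1 ∧ Odd p.2 ∧ 1 ≤ p.2 ∧
        |α - (p.1 : ℝ) / (p.2 : ℝ)| < ψ (p.2 : ℝ) / (p.2 : ℝ)}.Finite) :
    ∃ c : ℝ, 0 < c ∧ ∀ t : ℝ, 0 ≤ t →
      c * (ψ (t / Real.pi + 1)) ^ 2
        ≤ ‖1 + (Complex.exp ((t : ℂ) * Complex.I)
            + Complex.exp ((t : ℂ) * (α : ℂ) * Complex.I)) / 2‖ := by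
  obtain ⟨δ, hδ, hδle⟩ := hα.exists_pos_min_le_abs_mul_sub ψ hfin
  set m := min 1 (δ / ψ 1)
  have hm : 0 < m := lt_min one_pos (div_pos hδ (hψpos 1 one_pos))
  refine ⟨m ^ 2 / (2 * (1 + α ^ 2)), by positivity, fun t ht => ?_⟩
  set x := t / π
  have hx : t = π * x := (mul_div_cancel₀ t pi_ne_zero).symm
  obtain ⟨v, hv, hxv, hv1⟩ := exists_odd_abs_sub_le_one x
  obtain ⟨u, hu, hxu, -⟩ := exists_odd_abs_sub_le_one (x * α)
  have hv1 := hv1 (by positivity)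
  have hvx : (v : ℝ) ≤ x + 1 := by linarith [(abs_le.mp hxv).1]
  have hψx : m * ψ (x + 1) ≤ |v * α - u| :=
    (min_one_div_mul_le_min hψpos hψdec hδ.le (by exact_mod_cast hv1) hvx).trans
      (hδle u v hu hv hv1)
  have hψx0 : 0 ≤ m * ψ (x + 1) := mul_nonneg hm.le (hψpos _ (by positivity)).le
  calc m ^ 2 / (2 * (1 + α ^ 2)) * ψ (x + 1) ^ 2 = (m * ψ (x + 1)) ^ 2 / (2 * (1 + α ^ 2)) := by
        ring
    _ ≤ (v * α - u) ^ 2 / (2 * (1 + α ^ 2)) := by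
        rw [← sq_abs (v * α - u : ℝ)]
        gcongr
    _ ≤ (x - v) ^ 2 + (x * α - u) ^ 2 := by
        rw [div_le_iff₀' (by positivity)]
        exact sq_mul_sub_le α x u v
    _ ≤ (1 + cos t) / 2 + (1 + cos (t * α)) / 2 := by
        rw [hx, mul_assoc]
        exact add_le_add (sq_sub_le_one_add_cos_pi_mul_div_two hv hxv)
          (sq_sub_le_one_add_cos_pi_mul_div_two hu hxu)
    _ ≤ _ := by
        convert one_add_cos_div_two_add_le_norm t (t * α) using 5
        push_cast
        rfl
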